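/- Let P ⊂ ℝ³ be a finite set of n points in general position (no four coplanar) with n ≥ 4, and let p, q ∈ P with the depth of segment pq at most j, where 0 ≤ 2j ≤ n − 4. Then there exist at least two distinct points r ∈ P \ {p,q} such that the triangle pqr, suitably oriented, is a j-facet of P (i.e., the plane through p, q, r has exactly j points of P strictly on its positive side). -/

import Mathlib

/-
Rotate a plane about the line `pq`. Starting from a plane through `p, q` with at most `j` points
on its positive side, a half-turn brings it to the same plane with the opposite orientation,
which has at least `n - 3 - j ≥ j + 1` points on its positive side. By general position the
points of `P \ {p, q}` cross the rotating plane one at a time, so the count changes by one at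
each crossing, and on each of the two half-turns it passes from `j` to `j + 1` or back at a
point `r` lying on a plane through `p, q, r` with exactly `j` points on one side. The two
crossings happen at different points, since a single point would give `2j + 1 = n - 2`.

In coordinates the rotating plane is the pencil `a₀ + t • a₁`, `t ∈ ℝ`, with `a₁` chosen so
that no point of `P \ {p, q}` lies on the plane `a₁` missed by this parametrisation; the
positive side of `-(a₀ + t • a₁)` is then the negative side of `a₀ + t • a₁`.
-/

/-- Points of `ℝ³` as triples. -/
abbrev V3 : Type := ℝ × ℝ × ℝ

/-- The standard dot product on `ℝ³`. -/
def dot3 (a x : V3) : ℝ := a.1 * x.1 + a.2.1 * x.2.1 + a.2.2 * x.2.2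

/-- Number of points of `P` strictly on the positive side of the plane `dot3 a • = c`. -/
noncomputable def sideGT (P : Finset V3) (a : V3) (c : ℝ) : ℕ :=
  {x ∈ (P : Set V3) | c < dot3 a x}.ncard

/-- Number of points of `P` strictly on the negative side of the plane `dot3 a • = c`. -/
noncomputable def sideLT (P : Finset V3) (a : V3) (c : ℝ) : ℕ :=
  {x ∈ (P : Set V3) | dot3 a x < c}.ncard

/-- The segment `pq` has depth at least `k` with respect to `P`: every plane through
`p` and `q` has at least `k` points of `P` strictly on each of its two open sides. -/
def DepthAtLeast (P : Finset V3) (p q : V3) (k : ℕ) : Prop :=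
  ∀ a : V3, a ≠ 0 → dot3 a p = dot3 a q →
    k ≤ sideGT P a (dot3 a p) ∧ k ≤ sideLT P a (dot3 a p)

/-- The segment `pq` has depth exactly `k`: `k` is the smallest integer such that every
plane through `p` and `q` has at least `k` points of `P` strictly on each side. -/
def DepthEq (P : Finset V3) (p q : V3) (k : ℕ) : Prop :=
  DepthAtLeast P p q k ∧ ¬ DepthAtLeast P p q (k + 1)

/-- General position in `ℝ³`: no four points of `P` are coplanar. -/
def GenPos3 (P : Finset V3) : Prop :=
  ∀ s : Finset V3, s ⊆ P → s.card = 4 → ¬ Coplanar ℝ (s : Set V3)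

/-- Convex position: every point of `P` is a vertex of the convex hull of `P`. -/
def ConvexPos3 (P : Finset V3) : Prop :=
  ∀ p ∈ P, p ∉ convexHull ℝ ((P.erase p : Finset V3) : Set V3)

/-- The (suitably oriented) plane through `p`, `q`, `r` has exactly `j` points of `P`
strictly on its positive side, i.e. `pqr` is a `j`-facet of `P`. -/
def IsJFacetThrough (P : Finset V3) (j : ℕ) (p q r : V3) : Prop :=
  ∃ a : V3, a ≠ 0 ∧ dot3 a p = dot3 a q ∧ dot3 a q = dot3 a r ∧
    sideGT P a (dot3 a p) = j

open Finset

section PencilCount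

/- `α x + t * β x` is the signed height of the point `x` over the plane with parameter `t` of a
pencil rotating about a line; `posCount` and `negCount` count the points on its two sides. -/
variable {ι : Type*} (Q : Finset ι) (α β : ι → ℝ)

noncomputable def posCount (t : ℝ) : ℕ := #{x ∈ Q | 0 < α x + t * β x}

noncomputable def negCount (t : ℝ) : ℕ := #{x ∈ Q | α x + t * β x < 0}

structure HasDistinctRoots : Prop where
  ne_zero : ∀ x ∈ Q, β x ≠ 0
  eq_of_root : ∀ x ∈ Q, ∀ y ∈ Q, ∀ t : ℝ, α x + t * β x = 0 → α y + t * β y = 0 → x = y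

def IsJRoot (j : ℕ) (x : ι) : Prop :=
  ∃ t : ℝ, α x + t * β x = 0 ∧ (posCount Q α β t = j ∨ negCount Q α β t = j)

variable {Q α β}

lemma negCount_eq_posCount_neg (t : ℝ) : negCount Q α β t = posCount Q (-α) (-β) t := by
  simp only [negCount, posCount, Pi.neg_apply, mul_neg, ← neg_add, neg_pos]

lemma posCount_neg_right (t : ℝ) : posCount Q α (-β) t = posCount Q α β (-t) := by
  simp only [posCount, Pi.neg_apply, mul_neg, neg_mul]

lemma posCount_add_negCount_add_card_roots (t : ℝ) :
    posCount Q α β t + negCount Q α β t + #{x ∈ Q | α x + t * β x = 0} = #Q := by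
  rw [posCount, negCount, card_filter, card_filter, card_filter, card_eq_sum_ones,
    ← sum_add_distrib, ← sum_add_distrib]
  refine sum_congr rfl fun x _ => ?_
  rcases lt_trichotomy (α x + t * β x) 0 with h | h | h
  · simp [h, h.ne, h.not_gt]
  · simp [h]
  · simp [h, h.ne', h.not_gt]

lemma pos_mul_sub_of_notMem_Ico {b τ s s' : ℝ} (hs : s ≤ s') (h : 0 < b * (s' - τ))
    (hτ : τ ∉ Set.Ico s s') : 0 < b * (s - τ) := by
  rcases mul_pos_iff.1 h with ⟨hb, hτs'⟩ | ⟨hb, hτs'⟩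
  · have : τ < s := lt_of_not_ge fun hsτ => hτ ⟨hsτ, by linarith⟩
    exact mul_pos hb (by linarith)
  · exact mul_pos_of_neg_of_neg hb (by linarith)

namespace HasDistinctRoots

lemma neg (h : HasDistinctRoots Q α β) : HasDistinctRoots Q (-α) (-β) where
  ne_zero x hx := neg_ne_zero.2 (h.ne_zero x hx)
  eq_of_root x hx y hy t hxt hyt :=
    h.eq_of_root x hx y hy t (by simp only [Pi.neg_apply] at hxt; linarith)
      (by simp only [Pi.neg_apply] at hyt; linarith)

lemma neg_right (h : HasDistinctRoots Q α β) : HasDistinctRoots Q α (-β) where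
  ne_zero x hx := neg_ne_zero.2 (h.ne_zero x hx)
  eq_of_root x hx y hy t hxt hyt :=
    h.eq_of_root x hx y hy (-t) (by simp only [Pi.neg_apply] at hxt; linarith)
      (by simp only [Pi.neg_apply] at hyt; linarith)

lemma root_unique (h : HasDistinctRoots Q α β) {x : ι} (hx : x ∈ Q) {t t' : ℝ}
    (ht : α x + t * β x = 0) (ht' : α x + t' * β x = 0) : t = t' := by
  have : (t - t') * β x = 0 := by linarith
  exact sub_eq_zero.1 ((mul_eq_zero.1 this).resolve_right (h.ne_zero x hx))

lemma card_roots_le_one (h : HasDistinctRoots Q α β) (t : ℝ) :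
    #{x ∈ Q | α x + t * β x = 0} ≤ 1 :=
  card_le_one.2 fun x hx y hy => by
    rw [mem_filter] at hx hy
    exact h.eq_of_root x hx.1 y hy.1 t hx.2 hy.2

lemma posCount_add_negCount_of_root (h : HasDistinctRoots Q α β) {x : ι} (hx : x ∈ Q) {t : ℝ}
    (ht : α x + t * β x = 0) : posCount Q α β t + negCount Q α β t + 1 = #Q := by
  rw [← posCount_add_negCount_add_card_roots t,
    le_antisymm (h.card_roots_le_one t) (card_pos.2 ⟨x, mem_filter.2 ⟨hx, ht⟩⟩)]

lemma card_le_posCount_add_negCount (h : HasDistinctRoots Q α β) (t : ℝ) :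
    #Q ≤ posCount Q α β t + negCount Q α β t + 1 := by
  linarith [posCount_add_negCount_add_card_roots (Q := Q) (α := α) (β := β) t,
    h.card_roots_le_one t]

lemma exists_posCount_eq_card_pos (h : HasDistinctRoots Q α β) :
    ∃ T : ℝ, 0 ≤ T ∧ posCount Q α β T = #{x ∈ Q | 0 < β x} ∧
      posCount Q α β (-T) = #{x ∈ Q | β x < 0} := by
  set T := 1 + ∑ x ∈ Q, |α x / β x|
  have hT : ∀ x ∈ Q, |α x / β x| + 1 ≤ T := fun x hx => by
    have := single_le_sum (f := fun x => |α x / β x|) (fun _ _ => abs_nonneg _) hx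
    linarith
  have hsplit : ∀ x ∈ Q, ∀ t, α x + t * β x = β x * (t + α x / β x) := fun x hx t => by
    field_simp [h.ne_zero x hx]; ring
  refine ⟨T, by positivity, congrArg card (filter_congr fun x hx => ?_),
    congrArg card (filter_congr fun x hx => ?_)⟩
  · have : 0 < T + α x / β x := by linarith [hT x hx, neg_abs_le (α x / β x)]
    rw [hsplit x hx, mul_pos_iff_of_pos_right this]
  · have : -T + α x / β x < 0 := by linarith [hT x hx, le_abs_self (α x / β x)]
    rw [hsplit x hx, ← neg_mul_neg, mul_pos_iff_of_pos_right (neg_pos.2 this), neg_pos]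

theorem exists_upcrossing (h : HasDistinctRoots Q α β) {j : ℕ} {s₀ s₁ : ℝ} (hs : s₀ ≤ s₁)
    (h₀ : posCount Q α β s₀ ≤ j) (h₁ : j < posCount Q α β s₁) :
    ∃ x ∈ Q, 0 < β x ∧ ∃ t, α x + t * β x = 0 ∧ posCount Q α β t = j := by
  classical
  set τ : ι → ℝ := fun x => -α x / β x
  have hτ : ∀ x ∈ Q, ∀ t, α x + t * β x = β x * (t - τ x) := fun x hx t => by
    simp only [τ]; field_simp [h.ne_zero x hx]; ring
  -- Induct on the number of roots in `[s₀, s₁)`: at the last of them either the count crosses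
  -- from `j` to `j + 1`, or it already exceeds `j`.
  induction hn : #{x ∈ Q | τ x ∈ Set.Ico s₀ s₁} using Nat.strong_induction_on
    generalizing s₁ with
  | _ n ih =>
  obtain ⟨x, hxE, hxmax⟩ : ∃ x ∈ Q.filter (fun x => τ x ∈ Set.Ico s₀ s₁),
      ∀ y ∈ Q.filter (fun x => τ x ∈ Set.Ico s₀ s₁), τ y ≤ τ x := by
    refine exists_max_image _ τ (nonempty_iff_ne_empty.2 fun hE => h₁.not_ge (h₀.trans' ?_))
    refine card_le_card fun y hy => ?_
    rw [mem_filter] at hy ⊢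
    refine ⟨hy.1, ?_⟩
    rw [hτ y hy.1] at hy ⊢
    exact pos_mul_sub_of_notMem_Ico hs hy.2 fun hτy => (eq_empty_iff_forall_notMem.1 hE) y
      (mem_filter.2 ⟨hy.1, hτy⟩)
  obtain ⟨hx, hτx₀, hτx₁⟩ := mem_filter.1 hxE
  have hroot : α x + τ x * β x = 0 := by rw [hτ x hx, sub_self, mul_zero]
  by_cases hdone : 0 < β x ∧ posCount Q α β (τ x) = j
  · exact ⟨x, hx, hdone.1, τ x, hroot, hdone.2⟩
  have hsub : {y ∈ Q | 0 < α y + s₁ * β y} ⊆ insert x {y ∈ Q | 0 < α y + τ x * β y} := by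
    intro y hy
    rw [mem_filter] at hy
    rw [mem_insert, mem_filter, or_iff_not_imp_left]
    refine fun hyx => ⟨hy.1, ?_⟩
    rw [hτ y hy.1] at hy ⊢
    refine pos_mul_sub_of_notMem_Ico hτx₁.le hy.2 fun ⟨hxy, hys₁⟩ => hyx ?_
    have hyx' : τ y = τ x := le_antisymm (hxmax y (mem_filter.2 ⟨hy.1, hτx₀.trans hxy, hys₁⟩)) hxy
    exact h.eq_of_root y hy.1 x hx (τ x) (by rw [hτ y hy.1, hyx', sub_self, mul_zero]) hroot
  have hlarge : j < posCount Q α β (τ x) := by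
    by_cases hxs₁ : x ∈ Q.filter (fun y => 0 < α y + s₁ * β y)
    · have hβx : 0 < β x := by
        rw [mem_filter, hτ x hx] at hxs₁
        exact pos_of_mul_pos_left hxs₁.2 (by linarith)
      have := (card_le_card hsub).trans (card_insert_le _ _)
      have : posCount Q α β (τ x) ≠ j := fun hj => hdone ⟨hβx, hj⟩
      unfold posCount at *
      omega
    · have := card_le_card ((subset_insert_iff_of_notMem hxs₁).1 hsub)
      unfold posCount at *
      omega
  refine ih _ ?_ hτx₀ hlarge rfl
  rw [← hn]
  refine card_lt_card ((ssubset_iff_of_subset fun y hy => ?_).2 ⟨x, hxE, fun hx' => ?_⟩)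
  · rw [mem_filter] at hy ⊢
    exact ⟨hy.1, hy.2.1, hy.2.2.trans hτx₁⟩
  · exact (mem_filter.1 hx').2.2.false

theorem exists_downcrossing (h : HasDistinctRoots Q α β) {j : ℕ} {s₀ s₁ : ℝ} (hs : s₁ ≤ s₀)
    (h₀ : posCount Q α β s₀ ≤ j) (h₁ : j < posCount Q α β s₁) :
    ∃ x ∈ Q, β x < 0 ∧ ∃ t, α x + t * β x = 0 ∧ posCount Q α β t = j := by
  obtain ⟨x, hx, hβx, t, ht, hj⟩ := h.neg_right.exists_upcrossing (j := j) (neg_le_neg hs)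
    (by rwa [posCount_neg_right, neg_neg]) (by rwa [posCount_neg_right, neg_neg])
  rw [Pi.neg_apply, neg_pos] at hβx
  rw [Pi.neg_apply] at ht
  exact ⟨x, hx, hβx, -t, by linarith, by rwa [← posCount_neg_right]⟩

theorem exists_root_posCount_eq (h : HasDistinctRoots Q α β) {j : ℕ} {s₀ s₁ : ℝ}
    (h₀ : posCount Q α β s₀ ≤ j) (h₁ : j < posCount Q α β s₁) :
    ∃ x ∈ Q, ∃ t, α x + t * β x = 0 ∧ posCount Q α β t = j := by
  rcases le_total s₀ s₁ with hs | hs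
  · obtain ⟨x, hx, -, hxt⟩ := h.exists_upcrossing hs h₀ h₁
    exact ⟨x, hx, hxt⟩
  · obtain ⟨x, hx, -, hxt⟩ := h.exists_downcrossing hs h₀ h₁
    exact ⟨x, hx, hxt⟩

theorem exists_root_negCount_eq (h : HasDistinctRoots Q α β) {j : ℕ} {s₀ s₁ : ℝ}
    (h₀ : negCount Q α β s₀ ≤ j) (h₁ : j < negCount Q α β s₁) :
    ∃ x ∈ Q, ∃ t, α x + t * β x = 0 ∧ negCount Q α β t = j := by
  rw [negCount_eq_posCount_neg] at h₀ h₁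
  obtain ⟨x, hx, t, ht, hj⟩ := h.neg.exists_root_posCount_eq h₀ h₁
  simp only [Pi.neg_apply] at ht
  exact ⟨x, hx, t, by linarith, by rwa [negCount_eq_posCount_neg]⟩

theorem exists_two_isJRoot (h : HasDistinctRoots Q α β) {j : ℕ} (hQ : 2 * j + 2 ≤ #Q)
    (h₀ : posCount Q α β 0 ≤ j) :
    ∃ r ∈ Q, ∃ s ∈ Q, r ≠ s ∧ IsJRoot Q α β j r ∧ IsJRoot Q α β j s := by
  obtain ⟨T, hT, hGT, hGT'⟩ := h.exists_posCount_eq_card_pos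
  obtain ⟨T', hT', hLT, hLT'⟩ := h.neg.exists_posCount_eq_card_pos
  simp only [← negCount_eq_posCount_neg, Pi.neg_apply, neg_pos, neg_lt_zero] at hLT hLT'
  have hUD : #{x ∈ Q | 0 < β x} + #{x ∈ Q | β x < 0} = #Q := by
    classical
    rw [← card_union_of_disjoint (disjoint_filter.2 fun x _ h₁ h₂ => h₁.not_gt h₂), ← filter_or,
      filter_true_of_mem fun x hx => (h.ne_zero x hx).symm.lt_or_gt]
  have hL₀ : j < negCount Q α β 0 := by linarith [h.card_le_posCount_add_negCount 0]
  -- a point serving on both sides would force `#Q = 2j + 1`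
  have hne : ∀ x ∈ Q, ∀ t t', α x + t * β x = 0 → α x + t' * β x = 0 →
      posCount Q α β t = j → negCount Q α β t' = j → False := fun x hx t t' ht ht' hG hL => by
    have := h.posCount_add_negCount_of_root hx ht
    rw [h.root_unique hx ht ht'] at this hG
    omega
  -- Beyond all roots the positive side is `{β > 0}` (at `T`) or `{β < 0}` (at `-T`); if one of
  -- them has at most `j` points, `negCount`, which starts above `j`, comes down to it instead.
  by_cases hU : j < #{x ∈ Q | 0 < β x}
  · obtain ⟨r, hr, hβr, t, ht, hGr⟩ := h.exists_upcrossing hT h₀ (hGT ▸ hU)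
    by_cases hD : j < #{x ∈ Q | β x < 0}
    · obtain ⟨s, hs, hβs, t', ht', hGs⟩ :=
        h.exists_downcrossing (neg_nonpos.2 hT) h₀ (hGT' ▸ hD)
      exact ⟨r, hr, s, hs, fun hrs => (hrs ▸ hβr).not_gt hβs,
        ⟨t, ht, .inl hGr⟩, ⟨t', ht', .inl hGs⟩⟩
    · obtain ⟨s, hs, t', ht', hLs⟩ := h.exists_root_negCount_eq (hLT ▸ not_lt.1 hD) hL₀
      exact ⟨r, hr, s, hs, fun hrs => hne r hr t t' ht (hrs ▸ ht') hGr hLs,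
        ⟨t, ht, .inl hGr⟩, ⟨t', ht', .inr hLs⟩⟩
  · obtain ⟨r, hr, t, ht, hGr⟩ := h.exists_root_posCount_eq h₀ (s₁ := -T) (by omega)
    obtain ⟨s, hs, t', ht', hLs⟩ := h.exists_root_negCount_eq (hLT' ▸ not_lt.1 hU) hL₀
    exact ⟨r, hr, s, hs, fun hrs => hne r hr t t' ht (hrs ▸ ht') hGr hLs,
      ⟨t, ht, .inl hGr⟩, ⟨t', ht', .inr hLs⟩⟩

end HasDistinctRoots
end PencilCount

lemma dot3_comm (a x : V3) : dot3 a x = dot3 x a := by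
  simp only [dot3]; ring

lemma dot3_zero_left (x : V3) : dot3 0 x = 0 := by
  simp [dot3]

lemma dot3_add_left (a b x : V3) : dot3 (a + b) x = dot3 a x + dot3 b x := by
  simp only [dot3, Prod.fst_add, Prod.snd_add]; ring

lemma dot3_smul_left (t : ℝ) (a x : V3) : dot3 (t • a) x = t * dot3 a x := by
  simp only [dot3, Prod.smul_fst, Prod.smul_snd, smul_eq_mul]; ring

lemma dot3_neg_left (a x : V3) : dot3 (-a) x = -dot3 a x := by
  simp only [dot3, Prod.fst_neg, Prod.snd_neg]; ring

lemma dot3_add_right (a x y : V3) : dot3 a (x + y) = dot3 a x + dot3 a y := by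
  simp only [dot3, Prod.fst_add, Prod.snd_add]; ring

lemma dot3_smul_right (a : V3) (t : ℝ) (x : V3) : dot3 a (t • x) = t * dot3 a x := by
  simp only [dot3, Prod.smul_fst, Prod.smul_snd, smul_eq_mul]; ring

lemma dot3_sub_right (a x y : V3) : dot3 a (x - y) = dot3 a x - dot3 a y := by
  simp only [dot3, Prod.fst_sub, Prod.snd_sub]; ring

lemma dot3_sub_eq_zero_iff {a x y : V3} : dot3 a (x - y) = 0 ↔ dot3 a x = dot3 a y := by
  rw [dot3_sub_right, sub_eq_zero]

lemma dot3_self_pos {a : V3} (ha : a ≠ 0) : 0 < dot3 a a := by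
  obtain ⟨x, y, z⟩ := a
  have : x ≠ 0 ∨ y ≠ 0 ∨ z ≠ 0 := by
    by_contra! h
    exact ha (by simp [h])
  simp only [dot3]
  rcases this with h | h | h <;>
    nlinarith [mul_self_pos.2 h, mul_self_nonneg x, mul_self_nonneg y, mul_self_nonneg z]

def cross3 (a b : V3) : V3 :=
  (a.2.1 * b.2.2 - a.2.2 * b.2.1, a.2.2 * b.1 - a.1 * b.2.2, a.1 * b.2.1 - a.2.1 * b.1)

lemma dot3_cross3_left (a b : V3) : dot3 (cross3 a b) a = 0 := by
  simp only [dot3, cross3]; ring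

lemma dot3_cross3_right (a b : V3) : dot3 (cross3 a b) b = 0 := by
  simp only [dot3, cross3]; ring

lemma dot3_cross3_self (a b : V3) :
    dot3 (cross3 a b) (cross3 a b) = dot3 a a * dot3 b b - dot3 a b ^ 2 := by
  simp only [dot3, cross3]; ring

lemma sideGT_eq_card (P : Finset V3) (a : V3) (c : ℝ) :
    sideGT P a c = #{x ∈ P | c < dot3 a x} := by
  rw [sideGT, ← Set.ncard_coe_finset, coe_filter]
  rfl

lemma sideLT_eq_sideGT_neg (P : Finset V3) (a : V3) (c : ℝ) :
    sideLT P a c = sideGT P (-a) (-c) := by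
  simp only [sideLT, sideGT, dot3_neg_left, neg_lt_neg_iff]

lemma exists_sideGT_le_of_not_depthAtLeast {P : Finset V3} {p q : V3} {j : ℕ}
    (h : ¬DepthAtLeast P p q (j + 1)) :
    ∃ a : V3, a ≠ 0 ∧ dot3 a p = dot3 a q ∧ sideGT P a (dot3 a p) ≤ j := by
  simp only [DepthAtLeast, not_forall, not_and_or, not_le, Nat.lt_succ_iff] at h
  obtain ⟨a, ha, hpq, hGT | hLT⟩ := h
  · exact ⟨a, ha, hpq, hGT⟩
  · refine ⟨-a, neg_ne_zero.2 ha, by simp only [dot3_neg_left, hpq], ?_⟩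
    rwa [dot3_neg_left, ← sideLT_eq_sideGT_neg]

lemma coplanar_of_forall_dot3_eq {a : V3} (ha : a ≠ 0) {c : ℝ} {S : Set V3}
    (hS : ∀ z ∈ S, dot3 a z = c) : Coplanar ℝ S := by
  let φ : V3 →ₗ[ℝ] ℝ :=
    { toFun := dot3 a
      map_add' := dot3_add_right a
      map_smul' := dot3_smul_right a }
  have hspan : vectorSpan ℝ S ≤ LinearMap.ker φ := by
    rw [vectorSpan_def, Submodule.span_le]
    rintro _ ⟨x, hx, y, hy, rfl⟩
    simp [φ, dot3_sub_right, hS x hx, hS y hy]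
  have hker : LinearMap.ker φ ≠ ⊤ := fun htop =>
    (dot3_self_pos ha).ne' (LinearMap.mem_ker.1 (htop ▸ Submodule.mem_top : a ∈ LinearMap.ker φ))
  have hdim : Module.finrank ℝ V3 = 3 := by simp [Module.finrank_prod]
  rw [coplanar_iff_finrank_le_two]
  have hlt : Module.finrank ℝ (LinearMap.ker φ) < 3 := hdim ▸ Submodule.finrank_lt hker
  exact (Submodule.finrank_mono hspan).trans (Nat.lt_succ_iff.1 hlt)

lemma GenPos3.eq_of_dot3_sub_eq_zero {P : Finset V3} (hP : GenPos3 P) {a : V3} (ha : a ≠ 0)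
    {p q x y : V3} (hp : p ∈ P) (hq : q ∈ P) (hpq : p ≠ q) (hx : x ∈ (P.erase p).erase q)
    (hy : y ∈ (P.erase p).erase q) (hqa : dot3 a (q - p) = 0) (hxa : dot3 a (x - p) = 0)
    (hya : dot3 a (y - p) = 0) : x = y := by
  simp only [mem_erase] at hx hy
  by_contra hxy
  refine hP {p, q, x, y} (by simp [insert_subset_iff, hp, hq, hx.2.2, hy.2.2]) ?_
    (coplanar_of_forall_dot3_eq ha (c := dot3 a p) ?_)
  · rw [card_insert_of_notMem (by simp [hpq, Ne.symm hx.2.1, Ne.symm hy.2.1]),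
      card_insert_of_notMem (by simp [Ne.symm hx.1, Ne.symm hy.1]),
      card_pair hxy]
  · simp only [coe_insert, coe_singleton, Set.mem_insert_iff, Set.mem_singleton_iff]
    rw [dot3_sub_right, sub_eq_zero] at hqa hxa hya
    rintro z (rfl | rfl | rfl | rfl) <;> first | rfl | assumption

lemma eq_zero_of_smul_add_smul_cross3_eq_zero {a d : V3} (ha : a ≠ 0) (hd : d ≠ 0)
    (had : dot3 a d = 0) {l m : ℝ} (h : l • a + m • cross3 a d = 0) : l = 0 ∧ m = 0 := by
  have hee : 0 < dot3 (cross3 a d) (cross3 a d) := by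
    rw [dot3_cross3_self, had]
    simpa using mul_pos (dot3_self_pos ha) (dot3_self_pos hd)
  have h₀ := congrArg (dot3 · a) h
  have h₁ := congrArg (dot3 · (cross3 a d)) h
  simp only [dot3_add_left, dot3_smul_left, dot3_zero_left, dot3_cross3_left,
    dot3_comm a (cross3 a d), mul_zero, add_zero, zero_add, mul_eq_zero] at h₀ h₁
  exact ⟨h₀.resolve_right (dot3_self_pos ha).ne', h₁.resolve_right hee.ne'⟩

/-- Two independent planes through `p` and `q` have no further common point in `P`: otherwise
the plane of their pencil through one more point `y` would contain four points of `P`. -/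
lemma GenPos3.dot3_sub_ne_zero_of_independent {P : Finset V3} (hP : GenPos3 P) {p q : V3}
    (hp : p ∈ P) (hq : q ∈ P) (hpq : p ≠ q) (hQ : 1 < #((P.erase p).erase q)) {a b : V3}
    (hab : ∀ l m : ℝ, l • a + m • b = 0 → l = 0 ∧ m = 0) (hqa : dot3 a (q - p) = 0)
    (hqb : dot3 b (q - p) = 0) {x : V3} (hx : x ∈ (P.erase p).erase q)
    (hxa : dot3 a (x - p) = 0) : dot3 b (x - p) ≠ 0 := by
  intro hxb
  obtain ⟨y, hy, hyx⟩ := exists_mem_ne hQ x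
  by_cases hya : dot3 a (y - p) = 0
  · have ha : a ≠ 0 := fun ha => one_ne_zero (hab 1 0 (by simp [ha])).1
    exact hyx (hP.eq_of_dot3_sub_eq_zero ha hp hq hpq hx hy hqa hxa hya).symm
  set c := dot3 b (y - p) • a + (-dot3 a (y - p)) • b
  have hc : ∀ z, dot3 c z = dot3 b (y - p) * dot3 a z - dot3 a (y - p) * dot3 b z := fun z => by
    simp only [c, dot3_add_left, dot3_smul_left]; ring
  have hc₀ : c ≠ 0 := fun hc₀ => hya (neg_eq_zero.1 (hab _ _ hc₀).2)
  refine hyx (hP.eq_of_dot3_sub_eq_zero hc₀ hp hq hpq hx hy ?_ ?_ ?_).symm <;>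
    simp only [hc, hqa, hqb, hxa, hxb] <;> ring

lemma exists_pencil_direction {P : Finset V3} (hP : GenPos3 P) {p q a₀ : V3} (hp : p ∈ P)
    (hq : q ∈ P) (hpq : p ≠ q) (hQ : 1 < #((P.erase p).erase q)) (ha₀ : a₀ ≠ 0)
    (hqa₀ : dot3 a₀ (q - p) = 0) :
    ∃ a₁ : V3, dot3 a₁ (q - p) = 0 ∧ (∀ t : ℝ, a₀ + t • a₁ ≠ 0) ∧
      ∀ x ∈ (P.erase p).erase q, dot3 a₁ (x - p) ≠ 0 := by
  classical
  set e := cross3 a₀ (q - p)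
  have hqe : dot3 e (q - p) = 0 := dot3_cross3_right _ _
  have hindep : ∀ l m : ℝ, l • a₀ + m • e = 0 → l = 0 ∧ m = 0 := fun l m =>
    eq_zero_of_smul_add_smul_cross3_eq_zero ha₀ (sub_ne_zero.2 hpq.symm) hqa₀
  -- `a₁ := e + s • a₀`, with `s` avoiding the one bad value of each point
  obtain ⟨s, hs⟩ := Infinite.exists_notMem_finset
    (((P.erase p).erase q).image fun x => -dot3 e (x - p) / dot3 a₀ (x - p))
  refine ⟨e + s • a₀, ?_, fun t ht => ha₀ ?_, fun x hx hx₁ => ?_⟩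
  · rw [dot3_add_left, dot3_smul_left, hqe, hqa₀, mul_zero, add_zero]
  · obtain rfl : t = 0 := (hindep (1 + t * s) t (by rw [← ht]; module)).2
    simpa using ht
  · rw [dot3_add_left, dot3_smul_left] at hx₁
    by_cases hx₀ : dot3 a₀ (x - p) = 0
    · exact hP.dot3_sub_ne_zero_of_independent hp hq hpq hQ hindep hqa₀ hqe hx hx₀
        (by simpa [hx₀] using hx₁)
    · refine hs (mem_image.2 ⟨x, hx, ?_⟩)
      field_simp
      linarith

section PlanePencil

variable {P : Finset V3} {p q a₀ a₁ : V3}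

lemma dot3_pencil (t : ℝ) (x : V3) :
    dot3 (a₀ + t • a₁) (x - p) = dot3 a₀ (x - p) + t * dot3 a₁ (x - p) := by
  rw [dot3_add_left, dot3_smul_left]

lemma hasDistinctRoots_pencil (hP : GenPos3 P) (hp : p ∈ P) (hq : q ∈ P) (hpq : p ≠ q)
    (hqa₀ : dot3 a₀ (q - p) = 0) (hqa₁ : dot3 a₁ (q - p) = 0) (ha : ∀ t : ℝ, a₀ + t • a₁ ≠ 0)
    (ha₁ : ∀ x ∈ (P.erase p).erase q, dot3 a₁ (x - p) ≠ 0) :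
    HasDistinctRoots ((P.erase p).erase q) (fun x => dot3 a₀ (x - p))
      (fun x => dot3 a₁ (x - p)) where
  ne_zero := ha₁
  eq_of_root x hx y hy t hxt hyt := hP.eq_of_dot3_sub_eq_zero (ha t) hp hq hpq hx hy
    (by rw [dot3_pencil, hqa₀, hqa₁, mul_zero, add_zero]) (by rwa [dot3_pencil])
    (by rwa [dot3_pencil])

lemma sideGT_eq_card_erase {b : V3} (hqb : dot3 b (q - p) = 0) :
    sideGT P b (dot3 b p) = #{x ∈ (P.erase p).erase q | 0 < dot3 b (x - p)} := by
  rw [dot3_sub_right, sub_eq_zero] at hqb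
  rw [sideGT_eq_card, filter_erase, filter_erase, erase_eq_of_notMem, erase_eq_of_notMem]
  · exact congrArg card (filter_congr fun x _ => by rw [dot3_sub_right, sub_pos])
  all_goals simp [dot3_sub_right, hqb]

lemma isJFacetThrough_of_dot3 {b : V3} (hb : b ≠ 0) (hqb : dot3 b (q - p) = 0) {j : ℕ} {x : V3}
    (hxb : dot3 b (x - p) = 0) (hj : #{y ∈ (P.erase p).erase q | 0 < dot3 b (y - p)} = j) :
    IsJFacetThrough P j p q x :=
  ⟨b, hb, (dot3_sub_eq_zero_iff.1 hqb).symm,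
    (dot3_sub_eq_zero_iff.1 hqb).trans (dot3_sub_eq_zero_iff.1 hxb).symm,
    (sideGT_eq_card_erase hqb).trans hj⟩

lemma isJFacetThrough_of_isJRoot (hqa₀ : dot3 a₀ (q - p) = 0) (hqa₁ : dot3 a₁ (q - p) = 0)
    (ha : ∀ t : ℝ, a₀ + t • a₁ ≠ 0) {j : ℕ} {x : V3}
    (hx : IsJRoot ((P.erase p).erase q) (fun x => dot3 a₀ (x - p)) (fun x => dot3 a₁ (x - p)) j x) :
    IsJFacetThrough P j p q x := by
  obtain ⟨t, hxt, hj | hj⟩ := hx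
  · refine isJFacetThrough_of_dot3 (ha t) ?_ ?_ ?_ <;>
      simp only [dot3_pencil, hqa₀, hqa₁, hxt, mul_zero, add_zero, ← hj, posCount]
  · refine isJFacetThrough_of_dot3 (neg_ne_zero.2 (ha t)) ?_ ?_ ?_ <;>
      simp only [dot3_neg_left, dot3_pencil, hqa₀, hqa₁, hxt, mul_zero, add_zero, neg_zero,
        neg_pos, ← hj, negCount]

end PlanePencil

theorem stmt5_general (P : Finset V3) (n : ℕ) (hn : P.card = n)
    (hgen : GenPos3 P) (j : ℕ) (hj : 2 * j + 4 ≤ n)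
    (p q : V3) (hp : p ∈ P) (hq : q ∈ P) (hpq : p ≠ q)
    (hdepth : ¬ DepthAtLeast P p q (j + 1)) :
    ∃ r ∈ P, ∃ s ∈ P, r ≠ s ∧ r ≠ p ∧ r ≠ q ∧ s ≠ p ∧ s ≠ q ∧
      IsJFacetThrough P j p q r ∧ IsJFacetThrough P j p q s := by
  obtain ⟨a₀, ha₀, hpq₀, hside⟩ := exists_sideGT_le_of_not_depthAtLeast hdepth
  have hqa₀ : dot3 a₀ (q - p) = 0 := dot3_sub_eq_zero_iff.2 hpq₀.symm
  have hQ : #((P.erase p).erase q) = n - 2 := by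
    rw [card_erase_of_mem (mem_erase.2 ⟨hpq.symm, hq⟩), card_erase_of_mem hp, hn]; rfl
  obtain ⟨a₁, hqa₁, ha, ha₁⟩ := exists_pencil_direction hgen hp hq hpq (by omega) ha₀ hqa₀
  have h₀ : posCount ((P.erase p).erase q) (fun x => dot3 a₀ (x - p))
      (fun x => dot3 a₁ (x - p)) 0 ≤ j := by
    simpa [posCount, sideGT_eq_card_erase hqa₀] using hside
  obtain ⟨r, hr, s, hs, hrs, hr', hs'⟩ := (hasDistinctRoots_pencil hgen hp hq hpq hqa₀ hqa₁ ha ha₁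
    ).exists_two_isJRoot (by omega) h₀
  rw [mem_erase, mem_erase] at hr hs
  exact ⟨r, hr.2.2, s, hs.2.2, hrs, hr.2.1, hr.1, hs.2.1, hs.1,
    isJFacetThrough_of_isJRoot hqa₀ hqa₁ ha hr', isJFacetThrough_of_isJRoot hqa₀ hqa₁ ha hs'⟩

/-- Every segment of depth at most `j` (with `2j ≤ n − 4`) lies in at least two
`j`-facets of `P`. -/
theorem stmt5 (P : Finset V3) (n : ℕ) (hn : P.card = n) (hn4 : 4 ≤ n)
    (hgen : GenPos3 P) (j : ℕ) (hj : 2 * j + 4 ≤ n)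
    (p q : V3) (hp : p ∈ P) (hq : q ∈ P) (hpq : p ≠ q)
    (hdepth : ¬ DepthAtLeast P p q (j + 1)) :
    ∃ r ∈ P, ∃ s ∈ P, r ≠ s ∧ r ≠ p ∧ r ≠ q ∧ s ≠ p ∧ s ≠ q ∧
      IsJFacetThrough P j p q r ∧ IsJFacetThrough P j p q s :=
  stmt5_general P n hn hgen j hj p q hp hq hpq hdepth
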